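/- arXiv:1405.5506 — 2 statements merged into one kernel-verified Lean document; each statement's English description precedes it below -/
import Mathlib

section
/- With notation as above, δ(k) ⊆ g⊗k + k⊗g if and only if C_σ(r) = (σ⊗σ)(r) + r − (σ⊗1)(r) − (1⊗σ)(r) is invariant under the adjoint action of k on g⊗g (i.e., (ad_x⊗1 + 1⊗ad_x)(C_σ(r)) = 0 for all x ∈ k). -/
/-!
Put `τ = σ - 1`, so that `k = ker τ` and `C_σ(r) = (τ ⊗ τ) r`. For `x ∈ k` the derivation `ad_x`
commutes with `σ`, hence with `τ`, so `δ_x = ad_x ⊗ 1 + 1 ⊗ ad_x` commutes with `τ ⊗ τ`; thus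
`δ_x (C_σ r) = (τ ⊗ τ)(δ_x r)` vanishes iff `δ_x r ∈ ker (τ ⊗ τ)`. Over a field,
`ker (τ ⊗ τ) = g ⊗ ker τ + ker τ ⊗ g` by right exactness and flatness of the tensor product.
-/

open TensorProduct

section Field

variable {K V W V' W' : Type*} [Field K] [AddCommGroup V] [Module K V] [AddCommGroup W]
  [Module K W] [AddCommGroup V'] [Module K V'] [AddCommGroup W'] [Module K W']

theorem LinearMap.exact_subtype_ker_rangeRestrict (f : V →ₗ[K] W) :
    Function.Exact (LinearMap.ker f).subtype f.rangeRestrict := by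
  rw [LinearMap.exact_iff, LinearMap.ker_rangeRestrict, Submodule.range_subtype]

/-- `f ⊗ f'` is the surjection `f.rangeRestrict ⊗ f'.rangeRestrict`, whose kernel is given by
right exactness, followed by `range f ⊗ range f' → W ⊗ W'`, which is injective by flatness. -/
theorem TensorProduct.ker_map_eq_range_lTensor_sup_range_rTensor (f : V →ₗ[K] W)
    (f' : V' →ₗ[K] W') :
    LinearMap.ker (map f f') =
      LinearMap.range ((LinearMap.ker f').subtype.lTensor V) ⊔
        LinearMap.range ((LinearMap.ker f).subtype.rTensor V') := by
  have hfactor : map f f' = map (LinearMap.range f).subtype (LinearMap.range f').subtype ∘ₗ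
      map f.rangeRestrict f'.rangeRestrict := by
    rw [← map_comp]
    rfl
  have hinj : LinearMap.ker (map (LinearMap.range f).subtype (LinearMap.range f').subtype) = ⊥ :=
    LinearMap.ker_eq_bot.mpr <| map_injective_of_flat_flat _ _ (Submodule.injective_subtype _)
      (Submodule.injective_subtype _)
  rw [hfactor, LinearMap.ker_comp, hinj, Submodule.comap_bot]
  exact map_ker (LinearMap.exact_subtype_ker_rangeRestrict f) f.surjective_rangeRestrict
    (LinearMap.exact_subtype_ker_rangeRestrict f') f'.surjective_rangeRestrict

end Field

section CommRing

variable {K V V' : Type*} [CommRing K] [AddCommGroup V] [Module K V] [AddCommGroup V']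
  [Module K V']

theorem TensorProduct.map_sub_id_sub_id (σ : Module.End K V) (σ' : Module.End K V') :
    map (σ - LinearMap.id) (σ' - LinearMap.id) =
      map σ σ' + LinearMap.id - map σ LinearMap.id - map LinearMap.id σ' := by
  ext a b
  simp only [AlgebraTensorModule.curry_apply, curry_apply, LinearMap.coe_restrictScalars,
    map_tmul, LinearMap.sub_apply, LinearMap.add_apply, LinearMap.id_apply, tmul_sub, sub_tmul]
  abel

theorem TensorProduct.commute_map {a τ : Module.End K V} {b τ' : Module.End K V'}
    (ha : Commute a τ) (hb : Commute b τ') : Commute (map a b) (map τ τ') := by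
  rw [commute_iff_eq, ← TensorProduct.map_mul, ← TensorProduct.map_mul, ha.eq, hb.eq]

theorem TensorProduct.commute_map_id_add_map_id_map {a τ : Module.End K V}
    {b τ' : Module.End K V'} (ha : Commute a τ) (hb : Commute b τ') :
    Commute (map a LinearMap.id + map LinearMap.id b) (map τ τ') :=
  (commute_map ha (Commute.one_left τ')).add_left (commute_map (Commute.one_left τ) hb)

theorem LieAlgebra.commute_ad_of_apply_eq_self {g : Type*} [LieRing g] [LieAlgebra K g]
    {σ : Module.End K g} (hσ : ∀ x y : g, σ ⁅x, y⁆ = ⁅σ x, σ y⁆) {x : g} (hx : σ x = x) :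
    Commute (LieAlgebra.ad K g x) σ :=
  LinearMap.ext fun y => by simp [hσ, hx]

end CommRing

theorem stmt2_general (K : Type*) [Field K] (g : Type*) [LieRing g] [LieAlgebra K g]
    (σ : g →ₗ[K] g)
    (hσlie : ∀ x y : g, σ ⁅x, y⁆ = ⁅σ x, σ y⁆)
    (k : Submodule K g) (hk : k = LinearMap.ker (σ - LinearMap.id))
    (r : g ⊗[K] g) :
    (∀ x ∈ k,
      ((TensorProduct.map (LieAlgebra.ad K g x) LinearMap.id
        + TensorProduct.map LinearMap.id (LieAlgebra.ad K g x) :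
          g ⊗[K] g →ₗ[K] g ⊗[K] g)) r
        ∈ LinearMap.range (TensorProduct.map (LinearMap.id : g →ₗ[K] g) k.subtype) ⊔
          LinearMap.range (TensorProduct.map k.subtype (LinearMap.id : g →ₗ[K] g)))
    ↔ (∀ x ∈ k,
      ((TensorProduct.map (LieAlgebra.ad K g x) LinearMap.id
        + TensorProduct.map LinearMap.id (LieAlgebra.ad K g x) :
          g ⊗[K] g →ₗ[K] g ⊗[K] g))
        (TensorProduct.map σ σ r + r - TensorProduct.map σ LinearMap.id r
          - TensorProduct.map LinearMap.id σ r) = 0) := by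
  set τ : g →ₗ[K] g := σ - LinearMap.id
  have hC : map σ σ r + r - map σ LinearMap.id r - map LinearMap.id σ r = map τ τ r := by
    rw [map_sub_id_sub_id]
    rfl
  refine forall₂_congr fun x hx => ?_
  have hσx : σ x = x := sub_eq_zero.mp (hk ▸ hx : x ∈ LinearMap.ker τ)
  have hτ : Commute (LieAlgebra.ad K g x) τ :=
    (LieAlgebra.commute_ad_of_apply_eq_self hσlie hσx).sub_right (Commute.one_right _)
  rw [hC, ← Module.End.mul_apply, (commute_map_id_add_map_id_map hτ hτ).eq,
    Module.End.mul_apply, ← LinearMap.mem_ker,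
    ker_map_eq_range_lTensor_sup_range_rTensor, ← hk]
  rfl

/-- `δ(k) ⊆ g ⊗ k + k ⊗ g` if and only if
`C_σ(r) = (σ⊗σ)(r) + r - (σ⊗1)(r) - (1⊗σ)(r)` is invariant under the adjoint action of the
fixed-point subalgebra `k = g^σ` on `g ⊗ g`. -/
theorem stmt2 (K : Type*) [Field K] (g : Type*) [LieRing g] [LieAlgebra K g]
    [FiniteDimensional K g]
    (σ : g →ₗ[K] g) (hσbij : Function.Bijective σ)
    (hσlie : ∀ x y : g, σ ⁅x, y⁆ = ⁅σ x, σ y⁆)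
    (k : Submodule K g) (hk : k = LinearMap.ker (σ - LinearMap.id))
    (r : g ⊗[K] g) :
    (∀ x ∈ k,
      ((TensorProduct.map (LieAlgebra.ad K g x) LinearMap.id
        + TensorProduct.map LinearMap.id (LieAlgebra.ad K g x) :
          g ⊗[K] g →ₗ[K] g ⊗[K] g)) r
        ∈ LinearMap.range (TensorProduct.map (LinearMap.id : g →ₗ[K] g) k.subtype) ⊔
          LinearMap.range (TensorProduct.map k.subtype (LinearMap.id : g →ₗ[K] g)))
    ↔ (∀ x ∈ k,
      ((TensorProduct.map (LieAlgebra.ad K g x) LinearMap.id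
        + TensorProduct.map LinearMap.id (LieAlgebra.ad K g x) :
          g ⊗[K] g →ₗ[K] g ⊗[K] g))
        (TensorProduct.map σ σ r + r - TensorProduct.map σ LinearMap.id r
          - TensorProduct.map LinearMap.id σ r) = 0) :=
  stmt2_general K g σ hσlie k hk r
end

section
/- Let G be a group, σ an automorphism of G, and h₊, h₋ ∈ G. Define K₋ = h₋·σ(h₋)⁻¹, K₊ = σ(h₊)·h₊⁻¹, and in a finite-dimensional representation ρ set τ(g) = tr(ρ(g K₋ σ(g)⁻¹ K₊)). Then τ(φ₊(k) g φ₋(k')) = τ(g) for all k, k' in the fixed subgroup K = G^σ, where φ₊(k) = h₊ k h₊⁻¹ and φ₋(k') = h₋ k' h₋⁻¹. -/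
/-!
Write `τ(g) = tr ρ(g K₋ σ(g)⁻¹ K₊)`. Conjugation by `h₋` turns `σ`-fixed points into elements `y`
with `y K₋ σ(y)⁻¹ = K₋`, and conjugation by `h₊` turns them into elements `x` with
`σ(x)⁻¹ K₊ x = K₊`. For such `x` and `y` the argument of `τ` at `x g y` is the conjugate by `x` of
the argument at `g`, and a character is a class function.
-/

namespace MulEquiv

variable {G : Type*} [Group G] (σ : G ≃* G)

def twistedProduct (kMinus kPlus g : G) : G :=
  g * kMinus * (σ g)⁻¹ * kPlus

theorem twistedProduct_mul_mul {kMinus kPlus x y : G}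
    (hy : y * kMinus * (σ y)⁻¹ = kMinus) (hx : (σ x)⁻¹ * kPlus * x = kPlus) (g : G) :
    σ.twistedProduct kMinus kPlus (x * g * y) = x * σ.twistedProduct kMinus kPlus g * x⁻¹ := by
  calc σ.twistedProduct kMinus kPlus (x * g * y)
      = x * (g * (y * kMinus * (σ y)⁻¹) * (σ g)⁻¹ * ((σ x)⁻¹ * kPlus * x)) * x⁻¹ := by
        simp only [twistedProduct, map_mul, mul_inv_rev]
        group
    _ = x * σ.twistedProduct kMinus kPlus g * x⁻¹ := by
        rw [hy, hx, twistedProduct]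

theorem conj_mul_mul_map_conj_inv_of_map_eq {h k : G} (hk : σ k = k) :
    h * k * h⁻¹ * (h * (σ h)⁻¹) * (σ (h * k * h⁻¹))⁻¹ = h * (σ h)⁻¹ := by
  simp only [map_mul, map_inv, hk]
  group

theorem map_conj_inv_mul_mul_conj_of_map_eq {h k : G} (hk : σ k = k) :
    (σ (h * k * h⁻¹))⁻¹ * (σ h * h⁻¹) * (h * k * h⁻¹) = σ h * h⁻¹ := by
  simp only [map_mul, map_inv, hk]
  group

end MulEquiv

theorem stmt8_general (F : Type*) [Field F] (V : Type*) [AddCommGroup V] [Module F V]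
    (G : Type*) [Group G] (σ : G ≃* G) (ρ : G →* Module.End F V)
    (hp hm g k k' : G) (hk : σ k = k) (hk' : σ k' = k') :
    LinearMap.trace F V
      (ρ (((hp * k * hp⁻¹) * g * (hm * k' * hm⁻¹)) * (hm * (σ hm)⁻¹)
          * (σ ((hp * k * hp⁻¹) * g * (hm * k' * hm⁻¹)))⁻¹ * (σ hp * hp⁻¹)))
      = LinearMap.trace F V
        (ρ (g * (hm * (σ hm)⁻¹) * (σ g)⁻¹ * (σ hp * hp⁻¹))) := by
  have hconj := σ.twistedProduct_mul_mul (σ.conj_mul_mul_map_conj_inv_of_map_eq (h := hm) hk')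
    (σ.map_conj_inv_mul_mul_conj_of_map_eq (h := hp) hk) g
  exact (congrArg (Representation.character ρ) hconj).trans (Representation.char_conj ρ _ _)

/-- Twisted bi-invariance of the twisted reflection transfer matrix
`τ(g) = tr(ρ(g K₋ σ(g)⁻¹ K₊))` with `K₋ = h₋ σ(h₋)⁻¹`, `K₊ = σ(h₊) h₊⁻¹`, under
`g ↦ φ₊(k) g φ₋(k')` where `φ₊(k) = h₊ k h₊⁻¹`, `φ₋(k') = h₋ k' h₋⁻¹` and `k, k'` are fixed
by the automorphism `σ`. -/
theorem stmt8 (F : Type*) [Field F] (V : Type*) [AddCommGroup V] [Module F V]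
    [FiniteDimensional F V]
    (G : Type*) [Group G] (σ : G ≃* G) (ρ : G →* Module.End F V)
    (hp hm g k k' : G) (hk : σ k = k) (hk' : σ k' = k') :
    LinearMap.trace F V
      (ρ (((hp * k * hp⁻¹) * g * (hm * k' * hm⁻¹)) * (hm * (σ hm)⁻¹)
          * (σ ((hp * k * hp⁻¹) * g * (hm * k' * hm⁻¹)))⁻¹ * (σ hp * hp⁻¹)))
      = LinearMap.trace F V
        (ρ (g * (hm * (σ hm)⁻¹) * (σ g)⁻¹ * (σ hp * hp⁻¹))) :=
  stmt8_general F V G σ ρ hp hm g k k' hk hk'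
end
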